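/- Let n ≥ 2, m ∈ {1,…,n}, 0 < H₀ ≤ H₁, and ε ∈ (0, 1/n]. Let φ(k) = H_m(k)^{1/m} on the open positive cone Γ₊, and let 𝒞 = {k ∈ ℝ^n : H₀ ≤ H(k) ≤ H₁ and k_i ≥ ε·H(k) for all i}, a compact subset of Γ₊. Define φ̃ : ℝ^n → ℝ by φ̃(k) = min_{h ∈ 𝒞} Σ_i ∂φ/∂k_i(h)·k_i (the minimum is attained since 𝒞 is compact). Then: (i) φ̃ is concave on ℝ^n; (ii) φ̃ is positively homogeneous of degree one, i.e. φ̃(λk) = λ·φ̃(k) for all λ > 0 and k ∈ ℝ^n; and (iii) φ̃(k) = φ(k) for every k ∈ 𝒞. -/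

import Mathlib

/-- The normalized `m`-th elementary symmetric polynomial (the `m`-th mean curvature). -/
noncomputable def Hm (n m : ℕ) (k : Fin n → ℝ) : ℝ :=
  ((Nat.factorial m * Nat.factorial (n - m) : ℕ) : ℝ) / (Nat.factorial n : ℝ) *
    ∑ s ∈ Finset.powersetCard m Finset.univ, ∏ i ∈ s, k i

/-- `φ = H_m^(1/m)`. -/
noncomputable def phi (n m : ℕ) (k : Fin n → ℝ) : ℝ := Hm n m k ^ ((1 : ℝ) / m)

/-- The partial derivative `∂φ/∂k_i` at `h`. -/
noncomputable def phid (n m : ℕ) (h : Fin n → ℝ) (i : Fin n) : ℝ :=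
  fderiv ℝ (phi n m) h (Pi.single i 1)

/-- The compact pinched cone slab `𝒞 = {k : H₀ ≤ H(k) ≤ H₁, k_i ≥ ε·H(k) ∀ i}`. -/
def cone (n : ℕ) (ε H₀ H₁ : ℝ) : Set (Fin n → ℝ) :=
  {k | H₀ ≤ ∑ i, k i ∧ (∑ i, k i) ≤ H₁ ∧ ∀ i, ε * (∑ j, k j) ≤ k i}

/-- The Bellman-type extension `φ̃(k) = min_{h ∈ 𝒞} Σ_i ∂φ/∂k_i(h)·k_i`
(realized as an infimum, which is attained since `𝒞` is compact). -/
noncomputable def phiTilde (n m : ℕ) (ε H₀ H₁ : ℝ) (k : Fin n → ℝ) : ℝ :=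
  sInf ((fun h => ∑ i, phid n m h i * k i) '' cone n ε H₀ H₁)

open Finset Filter Topology

/-!
`φ̃` is the infimum of the linear functions `k ↦ Dφ(h) k` over `h ∈ 𝒞`, hence concave and
positively homogeneous; the infimum is finite because `Dφ` is continuous on the compact set
`𝒞 ⊂ Γ₊`. On `𝒞` it equals `φ`: the choice `h = k` gives `Dφ(k) k = φ(k)` by Euler's relation for
the `1`-homogeneous `φ`, while `φ(k) ≤ Dφ(h) k` for all `h, k ∈ Γ₊` because `φ` is superadditive,
so that `φ(h + t k) ≥ φ(h) + t φ(k)`. Superadditivity of `e_m^{1/m}` comes from writing `e_m` as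
the product of the ratios `e_{r+1}/e_r`, `r < m`, each of which is superadditive (Marcus–Lopes),
and from superadditivity of the geometric mean.
-/

section Esymm
variable {ι R : Type*} [CommSemiring R] {S : Finset ι} {r : ℕ} {x : ι → R}

def esymm (S : Finset ι) (r : ℕ) (x : ι → R) : R :=
  ∑ t ∈ S.powersetCard r, ∏ i ∈ t, x i

@[simp] theorem esymm_zero : esymm S 0 x = 1 := by
  simp [esymm]

theorem esymm_one : esymm S 1 x = ∑ i ∈ S, x i := by
  simp [esymm, powersetCard_one]

theorem esymm_smul (c : R) : esymm S r (c • x) = c ^ r * esymm S r x := by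
  rw [esymm, esymm, mul_sum]
  refine sum_congr rfl fun t ht => ?_
  simp only [Pi.smul_apply, smul_eq_mul, prod_mul_distrib, prod_const, (mem_powersetCard.1 ht).2]

theorem esymm_pos [PartialOrder R] [IsStrictOrderedRing R] (hr : r ≤ #S)
    (hx : ∀ i ∈ S, 0 < x i) : 0 < esymm S r x :=
  sum_pos (fun _ ht => prod_pos fun i hi => hx i ((mem_powersetCard.1 ht).1 hi))
    (powersetCard_nonempty.2 hr)

variable [DecidableEq ι] {i : ι}

theorem sum_filter_mem_prod (hi : i ∈ S) :
    ∑ t ∈ S.powersetCard (r + 1) with i ∈ t, ∏ j ∈ t, x j = x i * esymm (S.erase i) r x := by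
  rw [esymm, mul_sum]
  refine sum_nbij' (fun t => t.erase i) (insert i) (fun t ht => ?_) (fun u hu => ?_)
    (fun t ht => ?_) (fun u hu => ?_) (fun t ht => ?_)
  · simp only [mem_filter, mem_powersetCard] at ht ⊢
    exact ⟨erase_subset_erase i ht.1.1, by rw [card_erase_of_mem ht.2, ht.1.2, Nat.add_sub_cancel]⟩
  · simp only [mem_filter, mem_powersetCard] at hu ⊢
    have hiu : i ∉ u := fun h => (mem_erase.1 (hu.1 h)).1 rfl
    refine ⟨⟨insert_subset hi (hu.1.trans (erase_subset i S)), ?_⟩, mem_insert_self i u⟩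
    rw [card_insert_of_notMem hiu, hu.2]
  · exact insert_erase (mem_filter.1 ht).2
  · rw [mem_powersetCard] at hu
    exact erase_insert fun h => (mem_erase.1 (hu.1 h)).1 rfl
  · rw [mul_prod_erase t x (mem_filter.1 ht).2]

theorem esymm_succ_eq_erase (hi : i ∈ S) :
    esymm S (r + 1) x = x i * esymm (S.erase i) r x + esymm (S.erase i) (r + 1) x := by
  rw [← sum_filter_mem_prod hi, esymm, ← sum_filter_add_sum_filter_not _ (i ∈ ·), esymm]
  congr 1
  refine sum_congr (ext fun t => ?_) fun _ _ => rfl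
  simp only [mem_filter, mem_powersetCard, subset_erase]
  tauto

theorem sum_mul_esymm_erase :
    ∑ i ∈ S, x i * esymm (S.erase i) r x = (r + 1) * esymm S (r + 1) x := by
  rw [← sum_congr rfl fun i hi => sum_filter_mem_prod (x := x) (r := r) hi]
  simp only [sum_filter]
  rw [sum_comm, esymm, mul_sum]
  refine sum_congr rfl fun t ht => ?_
  rw [mem_powersetCard] at ht
  rw [sum_ite_mem, inter_eq_right.2 ht.1, sum_const, ht.2, nsmul_eq_mul]
  push_cast
  ring

end Esymm

section EsymmRatio
variable {ι K : Type*} [Field K] {S : Finset ι} {r : ℕ} {x y : ι → K}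

def esymmRatio (S : Finset ι) (r : ℕ) (x : ι → K) : K :=
  esymm S (r + 1) x / esymm S r x

theorem esymmRatio_zero : esymmRatio S 0 x = ∑ i ∈ S, x i := by
  rw [esymmRatio, esymm_one, esymm_zero, div_one]

variable [LinearOrder K] [IsStrictOrderedRing K]

theorem esymmRatio_pos (hr : r + 1 ≤ #S) (hx : ∀ i ∈ S, 0 < x i) : 0 < esymmRatio S r x :=
  div_pos (esymm_pos hr hx) (esymm_pos (by omega) hx)

theorem esymm_eq_prod_esymmRatio (hr : r ≤ #S) (hx : ∀ i ∈ S, 0 < x i) :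
    esymm S r x = ∏ s ∈ range r, esymmRatio S s x := by
  induction r with
  | zero => simp
  | succ r ih =>
    rw [prod_range_succ, ← ih (by omega), esymmRatio,
      mul_div_cancel₀ _ (esymm_pos (by omega) hx).ne']

variable [DecidableEq ι]

theorem mul_esymmRatio_succ (hr : r + 2 ≤ #S) (hx : ∀ i ∈ S, 0 < x i) :
    (r + 2) * esymmRatio S (r + 1) x =
      ∑ i ∈ S, (x i - x i ^ 2 / (x i + esymmRatio (S.erase i) r x)) := by
  have heuler : (r + 2) * esymm S (r + 2) x =
      ∑ i ∈ S, (x i * esymm S (r + 1) x - x i ^ 2 * esymm (S.erase i) r x) := by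
    have h := sum_mul_esymm_erase (S := S) (r := r + 1) (x := x)
    push_cast at h
    rw [show (r : K) + 2 = r + 1 + 1 by ring, ← h]
    refine sum_congr rfl fun i hi => ?_
    rw [esymm_succ_eq_erase (r := r) hi]
    ring
  rw [esymmRatio, ← mul_div_assoc, heuler, sum_div]
  refine sum_congr rfl fun i hi => ?_
  have hxe : ∀ j ∈ S.erase i, 0 < x j := fun j hj => hx j (mem_of_mem_erase hj)
  have hcard : r + 1 ≤ #(S.erase i) := by rw [card_erase_of_mem hi]; omega
  have he : 0 < esymm (S.erase i) r x := esymm_pos (by omega) hxe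
  have hden : 0 < x i * esymm (S.erase i) r x + esymm (S.erase i) (r + 1) x :=
    add_pos (mul_pos (hx i hi) he) (esymm_pos hcard hxe)
  rw [esymmRatio, esymm_succ_eq_erase (r := r) hi]
  field_simp

/-- **Marcus–Lopes inequality**. -/
theorem esymmRatio_add_le (hr : r + 1 ≤ #S) (hx : ∀ i ∈ S, 0 < x i) (hy : ∀ i ∈ S, 0 < y i) :
    esymmRatio S r x + esymmRatio S r y ≤ esymmRatio S r (x + y) := by
  induction r generalizing S with
  | zero => simp [esymmRatio_zero, sum_add_distrib]
  | succ r ih =>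
    have hxy : ∀ i ∈ S, 0 < (x + y) i := fun i hi => add_pos (hx i hi) (hy i hi)
    rw [← mul_le_mul_iff_right₀ (by positivity : (0 : K) < r + 2), mul_add,
      mul_esymmRatio_succ hr hx, mul_esymmRatio_succ hr hy, mul_esymmRatio_succ hr hxy,
      ← sum_add_distrib]
    refine sum_le_sum fun i hi => ?_
    have hcard : r + 1 ≤ #(S.erase i) := by rw [card_erase_of_mem hi]; omega
    have hxe : ∀ j ∈ S.erase i, 0 < x j := fun j hj => hx j (mem_of_mem_erase hj)
    have hye : ∀ j ∈ S.erase i, 0 < y j := fun j hj => hy j (mem_of_mem_erase hj)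
    have hih := ih hcard hxe hye
    set qx := esymmRatio (S.erase i) r x
    set qy := esymmRatio (S.erase i) r y
    have hqx : 0 < qx := esymmRatio_pos hcard hxe
    have hqy : 0 < qy := esymmRatio_pos hcard hye
    have hxi := hx i hi
    have hyi := hy i hi
    have hmono : (x i + y i) ^ 2 / (x i + y i + esymmRatio (S.erase i) r (x + y)) ≤
        (x i + y i) ^ 2 / (x i + y i + (qx + qy)) :=
      div_le_div_of_nonneg_left (by positivity) (by positivity) (by linarith)
    have hsedrakyan : (x i + y i) ^ 2 / (x i + y i + (qx + qy)) ≤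
        x i ^ 2 / (x i + qx) + y i ^ 2 / (y i + qy) := by
      have h := sq_sum_div_le_sum_sq_div univ ![x i, y i] (g := ![x i + qx, y i + qy])
        fun j _ => by fin_cases j <;> simp [add_pos, *]
      simp only [Fin.sum_univ_two, Matrix.cons_val_zero, Matrix.cons_val_one] at h
      convert h using 2
      ring
    simp only [Pi.add_apply]
    linarith

end EsymmRatio

theorem Real.prod_rpow_add_prod_rpow_le {ι : Type*} {s : Finset ι} (hs : s.Nonempty) {a b : ι → ℝ}
    (ha : ∀ i ∈ s, 0 < a i) (hb : ∀ i ∈ s, 0 < b i) :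
    (∏ i ∈ s, a i) ^ (1 / #s : ℝ) + (∏ i ∈ s, b i) ^ (1 / #s : ℝ) ≤
      (∏ i ∈ s, (a i + b i)) ^ (1 / #s : ℝ) := by
  have hab : ∀ i ∈ s, 0 < a i + b i := fun i hi => add_pos (ha i hi) (hb i hi)
  have hw : ∑ _i ∈ s, (1 / #s : ℝ) = 1 := by
    rw [sum_const, nsmul_eq_mul]; field_simp [hs.card_pos.ne']
  -- AM-GM applied to the ratios `c i / (a i + b i)`
  have hamgm : ∀ c : ι → ℝ, (∀ i ∈ s, 0 < c i) →
      (∏ i ∈ s, c i) ^ (1 / #s : ℝ) / (∏ i ∈ s, (a i + b i)) ^ (1 / #s : ℝ) ≤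
        ∑ i ∈ s, 1 / #s * (c i / (a i + b i)) := by
    intro c hc
    rw [← Real.div_rpow (prod_nonneg fun i hi => (hc i hi).le)
      (prod_nonneg fun i hi => (hab i hi).le), ← prod_div_distrib,
      ← Real.finsetProd_rpow _ _ fun i hi => div_nonneg (hc i hi).le (hab i hi).le]
    exact Real.geom_mean_le_arith_mean_weighted _ _ _ (fun _ _ => by positivity) hw
      fun i hi => div_nonneg (hc i hi).le (hab i hi).le
  have hsum :
      ∑ i ∈ s, 1 / #s * (a i / (a i + b i)) + ∑ i ∈ s, 1 / #s * (b i / (a i + b i)) = 1 := by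
    rw [← sum_add_distrib]
    refine Eq.trans (sum_congr rfl fun i hi => ?_) hw
    rw [← mul_add, ← add_div, div_self (hab i hi).ne', mul_one]
  rw [← div_le_one (Real.rpow_pos_of_pos (prod_pos hab) _), add_div]
  linarith [hamgm a ha, hamgm b hb]

theorem esymm_rpow_add_le {ι : Type*} [DecidableEq ι] {S : Finset ι} {r : ℕ} {x y : ι → ℝ}
    (hr : 1 ≤ r) (hrS : r ≤ #S) (hx : ∀ i ∈ S, 0 < x i) (hy : ∀ i ∈ S, 0 < y i) :
    esymm S r x ^ (1 / r : ℝ) + esymm S r y ^ (1 / r : ℝ) ≤ esymm S r (x + y) ^ (1 / r : ℝ) := by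
  have hxy : ∀ i ∈ S, 0 < (x + y) i := fun i hi => add_pos (hx i hi) (hy i hi)
  have hq : ∀ z : ι → ℝ, (∀ i ∈ S, 0 < z i) → ∀ s ∈ range r, 0 < esymmRatio S s z :=
    fun z hz s hs => esymmRatio_pos (by rw [mem_range] at hs; omega) hz
  rw [esymm_eq_prod_esymmRatio hrS hx, esymm_eq_prod_esymmRatio hrS hy,
    esymm_eq_prod_esymmRatio hrS hxy]
  have hnonneg : ∀ s ∈ range r, 0 ≤ esymmRatio S s x + esymmRatio S s y :=
    fun s hs => (add_pos (hq x hx s hs) (hq y hy s hs)).le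
  calc _ ≤ (∏ s ∈ range r, (esymmRatio S s x + esymmRatio S s y)) ^ (1 / r : ℝ) := by
        simpa using Real.prod_rpow_add_prod_rpow_le (nonempty_range_iff.2 (by omega))
          (hq x hx) (hq y hy)
    _ ≤ _ := by
        refine Real.rpow_le_rpow (prod_nonneg hnonneg) (prod_le_prod hnonneg fun s hs => ?_)
          (by positivity)
        exact esymmRatio_add_le (by rw [mem_range] at hs; omega) hx hy

section HomogeneousDeriv
variable {E : Type*} [NormedAddCommGroup E] [NormedSpace ℝ E] {f : E → ℝ} {f' : E →L[ℝ] ℝ} {x : E}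

theorem HasFDerivAt.apply_self_eq_of_homogeneous (hf : HasFDerivAt f f' x)
    (hhom : ∀ t > 0, f (t • x) = t * f x) : f' x = f x := by
  have hray : HasDerivAt (fun t : ℝ => f (t • x)) (f' x) 1 := by
    have hline : HasDerivAt (fun t : ℝ => t • x) x 1 := by
      simpa using (hasDerivAt_id (1 : ℝ)).smul_const x
    exact (one_smul ℝ x ▸ hf).comp_hasDerivAt (1 : ℝ) hline
  have hlin : HasDerivAt (fun t : ℝ => f (t • x)) (f x) 1 := by
    have hid : HasDerivAt (fun t : ℝ => t * f x) (f x) 1 := by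
      simpa using (hasDerivAt_id (1 : ℝ)).mul_const (f x)
    refine hid.congr_of_eventuallyEq ?_
    filter_upwards [lt_mem_nhds one_pos] with t ht using hhom t ht
  exact hray.unique hlin

theorem HasFDerivAt.le_apply_of_forall_add_smul (hf : HasFDerivAt f f' x) {k : E} {c : ℝ}
    (hk : ∀ t > 0, f x + t * c ≤ f (x + t • k)) : c ≤ f' k := by
  have hray : HasDerivAt (fun t : ℝ => f (x + t • k)) (f' k) 0 := by
    have hline : HasDerivAt (fun t : ℝ => x + t • k) k 0 := by
      simpa using ((hasDerivAt_id (0 : ℝ)).smul_const k).const_add x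
    exact (by simpa using hf : HasFDerivAt f f' (x + (0 : ℝ) • k)).comp_hasDerivAt 0 hline
  have hslope : Tendsto (slope (fun t : ℝ => f (x + t • k)) 0) (𝓝[>] 0) (𝓝 (f' k)) :=
    (hasDerivAt_iff_tendsto_slope.1 hray).mono_left (nhdsWithin_mono 0 fun t ht => ne_of_gt ht)
  refine ge_of_tendsto hslope (eventually_nhdsWithin_of_forall fun t (ht : 0 < t) => ?_)
  rw [slope_def_field, sub_zero, zero_smul, add_zero, le_div_iff₀ ht]
  linarith [hk t ht]

end HomogeneousDeriv

section InfOfLinear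
variable {X E : Type*} [AddCommGroup E] [Module ℝ E] [TopologicalSpace E]
  (L : X → E →L[ℝ] ℝ) (C : Set X)

theorem concaveOn_sInf_image_apply (hbdd : ∀ k, BddBelow ((L · k) '' C)) :
    ConcaveOn ℝ Set.univ fun k => sInf ((L · k) '' C) := by
  refine ⟨convex_univ, fun x _ y _ a b ha hb _ => ?_⟩
  rcases C.eq_empty_or_nonempty with rfl | hC
  · simp
  refine le_csInf (hC.image _) ?_
  rintro _ ⟨h, hh, rfl⟩
  dsimp only
  rw [map_add, map_smul, map_smul]
  exact add_le_add (smul_le_smul_of_nonneg_left (csInf_le (hbdd x) ⟨h, hh, rfl⟩) ha)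
    (smul_le_smul_of_nonneg_left (csInf_le (hbdd y) ⟨h, hh, rfl⟩) hb)

theorem sInf_image_apply_smul {c : ℝ} (hc : 0 ≤ c) (k : E) :
    sInf ((L · (c • k)) '' C) = c * sInf ((L · k) '' C) := by
  simp_rw [map_smul, smul_eq_mul]
  rw [← smul_eq_mul, ← Real.sInf_smul_of_nonneg hc, ← Set.image_smul, Set.image_image]
  rfl

end InfOfLinear

section Phi
variable {n m : ℕ} {k : Fin n → ℝ}

theorem Hm_eq_esymm_div_choose (hmn : m ≤ n) (k : Fin n → ℝ) :
    Hm n m k = esymm univ m k / n.choose m := by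
  have hfac := Nat.choose_mul_factorial_mul_factorial hmn
  have hchoose : (0 : ℝ) < n.choose m := by exact_mod_cast Nat.choose_pos hmn
  rw [Hm, esymm, ← hfac]
  push_cast
  field_simp

theorem Hm_pos (hmn : m ≤ n) (hk : ∀ i, 0 < k i) : 0 < Hm n m k := by
  rw [Hm_eq_esymm_div_choose hmn]
  exact div_pos (esymm_pos (by simpa using hmn) fun i _ => hk i)
    (by exact_mod_cast Nat.choose_pos hmn)

theorem contDiff_Hm {N : WithTop ℕ∞} : ContDiff ℝ N (Hm n m) :=
  contDiff_const.mul <| ContDiff.sum fun _ _ => contDiff_prod fun i _ => contDiff_apply ℝ ℝ i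

theorem phi_smul (hm1 : 1 ≤ m) (hmn : m ≤ n) (hk : ∀ i, 0 < k i) {t : ℝ} (ht : 0 < t) :
    phi n m (t • k) = t * phi n m k := by
  rw [phi, phi, Hm_eq_esymm_div_choose hmn, esymm_smul, mul_div_assoc,
    ← Hm_eq_esymm_div_choose hmn, Real.mul_rpow (by positivity) (Hm_pos hmn hk).le,
    ← Real.rpow_natCast, ← Real.rpow_mul ht.le, mul_one_div_cancel (by positivity), Real.rpow_one]

theorem phi_add_le (hm1 : 1 ≤ m) (hmn : m ≤ n) {x y : Fin n → ℝ} (hx : ∀ i, 0 < x i)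
    (hy : ∀ i, 0 < y i) : phi n m x + phi n m y ≤ phi n m (x + y) := by
  have hchoose : (0 : ℝ) ≤ n.choose m := Nat.cast_nonneg _
  have hpos : ∀ z : Fin n → ℝ, (∀ i, 0 < z i) → 0 ≤ esymm univ m z :=
    fun z hz => (esymm_pos (by simpa using hmn) fun i _ => hz i).le
  have hxy : ∀ i, 0 < (x + y) i := fun i => add_pos (hx i) (hy i)
  simp only [phi, Hm_eq_esymm_div_choose hmn]
  rw [Real.div_rpow (hpos x hx) hchoose, Real.div_rpow (hpos y hy) hchoose,
    Real.div_rpow (hpos _ hxy) hchoose, ← add_div]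
  gcongr
  exact esymm_rpow_add_le hm1 (by simpa using hmn) (fun i _ => hx i) fun i _ => hy i

theorem contDiffAt_phi {N : WithTop ℕ∞} (hk : 0 < Hm n m k) : ContDiffAt ℝ N (phi n m) k :=
  contDiff_Hm.contDiffAt.rpow_const_of_ne hk.ne'

theorem continuousOn_fderiv_phi : ContinuousOn (fderiv ℝ (phi n m)) {k | 0 < Hm n m k} := by
  have hphi : ContDiffOn ℝ 1 (phi n m) {k | 0 < Hm n m k} :=
    fun _ hk => (contDiffAt_phi hk).contDiffWithinAt
  exact hphi.continuousOn_fderiv_of_isOpen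
    (isOpen_lt continuous_const (contDiff_Hm (N := 0)).continuous) le_rfl

theorem fderiv_phi_apply_self (hm1 : 1 ≤ m) (hmn : m ≤ n) (hk : ∀ i, 0 < k i) :
    fderiv ℝ (phi n m) k k = phi n m k :=
  HasFDerivAt.apply_self_eq_of_homogeneous
    ((contDiffAt_phi (N := 1) (Hm_pos hmn hk)).differentiableAt one_ne_zero).hasFDerivAt
    fun _ ht => phi_smul hm1 hmn hk ht

theorem phi_le_fderiv_phi_apply (hm1 : 1 ≤ m) (hmn : m ≤ n) {h : Fin n → ℝ} (hh : ∀ i, 0 < h i)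
    (hk : ∀ i, 0 < k i) : phi n m k ≤ fderiv ℝ (phi n m) h k :=
  HasFDerivAt.le_apply_of_forall_add_smul
    ((contDiffAt_phi (N := 1) (Hm_pos hmn hh)).differentiableAt one_ne_zero).hasFDerivAt
    fun t ht => by
      rw [← phi_smul hm1 hmn hk ht]
      exact phi_add_le hm1 hmn hh fun i => mul_pos ht (hk i)

end Phi

section Cone
variable {n m : ℕ} {ε H₀ H₁ : ℝ} {k : Fin n → ℝ}

theorem pos_of_mem_cone (hH₀ : 0 < H₀) (hε : 0 < ε) (hk : k ∈ cone n ε H₀ H₁) (i : Fin n) :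
    0 < k i :=
  (mul_pos hε (hH₀.trans_le hk.1)).trans_le (hk.2.2 i)

theorem isCompact_cone (hH₀ : 0 ≤ H₀) (hε : 0 ≤ ε) : IsCompact (cone n ε H₀ H₁) := by
  have hclosed : IsClosed (cone n ε H₀ H₁) := by
    simp only [cone, Set.ofPred_and, Set.ofPred_forall]
    exact (isClosed_le (by fun_prop) (by fun_prop)).inter
      ((isClosed_le (by fun_prop) (by fun_prop)).inter
        (isClosed_iInter fun i => isClosed_le (by fun_prop) (by fun_prop)))
  refine (isCompact_Icc (a := 0) (b := fun _ => H₁)).of_isClosed_subset hclosed fun k hk => ?_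
  have hnonneg : ∀ i, 0 ≤ k i := fun i => (mul_nonneg hε (hH₀.trans hk.1)).trans (hk.2.2 i)
  exact ⟨hnonneg, fun i => (single_le_sum (fun j _ => hnonneg j) (mem_univ i)).trans hk.2.1⟩

theorem bddBelow_image_fderiv_phi_apply (hmn : m ≤ n) (hH₀ : 0 < H₀) (hε : 0 < ε)
    (k : Fin n → ℝ) : BddBelow ((fderiv ℝ (phi n m) · k) '' cone n ε H₀ H₁) := by
  refine IsCompact.bddBelow ((isCompact_cone hH₀.le hε.le).image_of_continuousOn ?_)
  have hcone : cone n ε H₀ H₁ ⊆ {h | 0 < Hm n m h} :=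
    fun h hh => Hm_pos hmn (pos_of_mem_cone hH₀ hε hh)
  exact (continuousOn_fderiv_phi.mono hcone).clm_apply continuousOn_const

theorem phiTilde_eq_sInf_fderiv (n m : ℕ) (ε H₀ H₁ : ℝ) :
    phiTilde n m ε H₀ H₁ = fun k => sInf ((fderiv ℝ (phi n m) · k) '' cone n ε H₀ H₁) := by
  have hsum (L : (Fin n → ℝ) →L[ℝ] ℝ) (k : Fin n → ℝ) : ∑ i, L (Pi.single i 1) * k i = L k := by
    conv_rhs => rw [← univ_sum_single k, map_sum]
    refine sum_congr rfl fun i _ => ?_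
    rw [mul_comm, ← smul_eq_mul, ← map_smul, ← Pi.single_smul', smul_eq_mul, mul_one]
  ext k
  simp only [phiTilde, phid, hsum]

end Cone

theorem stmt10_general (n m : ℕ) (hm1 : 1 ≤ m) (hmn : m ≤ n)
    (H₀ H₁ ε : ℝ) (hH0 : 0 < H₀) (hε1 : 0 < ε) :
    ConcaveOn ℝ Set.univ (phiTilde n m ε H₀ H₁) ∧
    (∀ lam > (0 : ℝ), ∀ k : Fin n → ℝ,
      phiTilde n m ε H₀ H₁ (lam • k) = lam * phiTilde n m ε H₀ H₁ k) ∧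
    (∀ k ∈ cone n ε H₀ H₁, phiTilde n m ε H₀ H₁ k = phi n m k) := by
  have hbdd := bddBelow_image_fderiv_phi_apply (H₁ := H₁) hmn hH0 hε1
  have hpos := fun h (hh : h ∈ cone n ε H₀ H₁) => pos_of_mem_cone hH0 hε1 hh
  simp only [phiTilde_eq_sInf_fderiv]
  refine ⟨concaveOn_sInf_image_apply _ _ hbdd,
    fun lam hlam k => sInf_image_apply_smul _ _ hlam.le k, fun k hk => le_antisymm ?_ ?_⟩
  · exact csInf_le (hbdd k) ⟨k, hk, fderiv_phi_apply_self hm1 hmn (hpos k hk)⟩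
  · refine le_csInf ⟨_, k, hk, rfl⟩ ?_
    rintro _ ⟨h, hh, rfl⟩
    exact phi_le_fderiv_phi_apply hm1 hmn (hpos h hh) (hpos k hk)

/-- The Bellman extension `φ̃` of `φ = H_m^(1/m)` relative to the compact pinched set `𝒞`
is (i) concave on all of `ℝ^n`, (ii) positively homogeneous of degree one, and
(iii) coincides with `φ` on `𝒞`. -/
theorem stmt10 (n m : ℕ) (hn : 2 ≤ n) (hm1 : 1 ≤ m) (hmn : m ≤ n)
    (H₀ H₁ ε : ℝ) (hH0 : 0 < H₀) (hH01 : H₀ ≤ H₁) (hε1 : 0 < ε) (hε2 : ε ≤ 1 / n) :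
    ConcaveOn ℝ Set.univ (phiTilde n m ε H₀ H₁) ∧
    (∀ lam > (0 : ℝ), ∀ k : Fin n → ℝ,
      phiTilde n m ε H₀ H₁ (lam • k) = lam * phiTilde n m ε H₀ H₁ k) ∧
    (∀ k ∈ cone n ε H₀ H₁, phiTilde n m ε H₀ H₁ k = phi n m k) :=
  stmt10_general n m hm1 hmn H₀ H₁ ε hH0 hε1
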